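/- Let B be a multiset of positive integers such that 1 ∈ B and every element of B has multiplicity exactly 3 except that it contains 1 with multiplicity 3 as well (i.e., B consists of elements each occurring exactly 3 times, with 1 among them). Then the B-partition function satisfies p_B(a)·p_B(b) > p_B(a+b) for all positive integers a, b, except possibly a = b = 1 when 2 ∈ B. -/

import Mathlib

open scoped Classical

/-- Sum of those divisors of `j` that belong to the multiset of positive integers
with multiplicity function `μ`, counted with multiplicity: `σ_A(j) = ∑_{d ∣ j} d·μ(d)`. -/
noncomputable def sigmaA (μ : ℕ → ℕ) (j : ℕ) : ℕ := ∑ d ∈ Nat.divisors j, d * μ d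

/-- The polynomials `f_{A,n}(x)` associated with the multiset of positive integers
with multiplicity function `μ`, defined (equivalently to the generating function
`∑ f_{A,n}(x) qⁿ = ∏_{a∈A} (1/(1-q^a))^x`) by `f_{A,0} = 1` and the recurrence
`f_{A,n}(x) = (x/n) ∑_{j=1}^{n} σ_A(j) f_{A,n-j}(x)`. -/
noncomputable def fA (μ : ℕ → ℕ) : ℕ → ℝ → ℝ
  | 0, _ => 1
  | n + 1, x =>
      x / (n + 1) * ∑ j ∈ Finset.range (n + 1), (sigmaA μ (j + 1) : ℝ) * fA μ (n - j) x
  decreasing_by exact Nat.lt_succ_of_le (Nat.sub_le n j)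

/-- `f_{A,n}(x)` for an ordinary set `A` of positive integers. -/
noncomputable def fS (A : Set ℕ) : ℕ → ℝ → ℝ := fA (fun a => if a ∈ A then 1 else 0)

/-!
Write `p = p_B` and `σ = σ_A`, so that `n p(n) = ∑_{j=1}^n σ(j) p(n-j)`. Splitting this sum
for `n = a + b` at `j = b` gives
`(a+b)(p(a)p(b) - p(a+b)) = ∑_{j ≤ b} σ(j)(p(a)p(b-j) - p(a+b-j)) + ∑_{k ≤ a} (σ(k)p(b) - σ(b+k)) p(a-k)`,
so by induction on `a + b` it suffices that `σ(b+k) ≤ σ(k) p(b)` for `1 ≤ k ≤ a ≤ b`, strictly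
for `k = a`. As `σ(k) ≥ 3`, this follows from `σ(m) < 3 p(b)` for `b < m ≤ 2b`, which fails
only for `m = 2` when `2 ∈ B`: then `σ(2) = 9 = 3 p(1)`.

For that, bound `p(b)` from below by the number `L(b)` of `B`-partitions of `b` with at most one
part other than `1`; `L` is a subsolution of the recurrence, hence `L ≤ p`. A divisor `d ≤ m/3`
of `m` contributes `d μ(d)` to `σ(m)`, at most three times the number `μ(d) C(b-d+2, 2)` of
partitions of `b` into one part `d` and ones. The only other divisors are `1`, `m/2` and `m`,
which for `b ≥ 4` are outweighed by the `C(b+2, 2)` partitions of `b` into ones; the cases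
`b ≤ 3` are checked directly.
-/

open Finset PowerSeries

variable {μ : ℕ → ℕ}

theorem fA_zero (x : ℝ) : fA μ 0 x = 1 := by
  rw [fA]

theorem fA_rec (n : ℕ) (x : ℝ) :
    (n : ℝ) * fA μ n x = x * ∑ j ∈ range n, (sigmaA μ (j + 1) : ℝ) * fA μ (n - 1 - j) x := by
  cases n with
  | zero => simp
  | succ n =>
    rw [fA, Nat.add_sub_cancel]
    push_cast
    field_simp

theorem fA_nonneg {x : ℝ} (hx : 0 ≤ x) (n : ℕ) : 0 ≤ fA μ n x := by
  induction n using Nat.strong_induction_on with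
  | _ n ih =>
    cases n with
    | zero => simp [fA_zero]
    | succ n =>
      rw [fA]
      exact mul_nonneg (by positivity) <| sum_nonneg fun j hj =>
        mul_nonneg (Nat.cast_nonneg _) (ih _ (by omega))

theorem le_fA_of_subsolution {q : ℕ → ℝ} (h0 : q 0 ≤ 1)
    (hq : ∀ n, n * q n ≤ ∑ j ∈ range n, (sigmaA μ (j + 1) : ℝ) * q (n - 1 - j)) (n : ℕ) :
    q n ≤ fA μ n 1 := by
  induction n using Nat.strong_induction_on with
  | _ n ih =>
    rcases n.eq_zero_or_pos with rfl | hn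
    · rwa [fA_zero]
    · have h : (n : ℝ) * q n ≤ n * fA μ n 1 := by
        rw [fA_rec, one_mul]
        refine (hq n).trans (sum_le_sum fun j hj => ?_)
        exact mul_le_mul_of_nonneg_left (ih _ (by simp at hj; omega)) (Nat.cast_nonneg _)
      exact le_of_mul_le_mul_left h (by exact_mod_cast hn)

theorem mul_fA_mul_sub_fA_add (a b : ℕ) :
    ((b + a : ℕ) : ℝ) * (fA μ a 1 * fA μ b 1 - fA μ (b + a) 1) =
      ∑ j ∈ range b, (sigmaA μ (j + 1) : ℝ) *
          (fA μ a 1 * fA μ (b - 1 - j) 1 - fA μ (a + (b - 1 - j)) 1) +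
        ∑ k ∈ range a, ((sigmaA μ (k + 1) : ℝ) * fA μ b 1 - sigmaA μ (b + k + 1)) *
          fA μ (a - 1 - k) 1 := by
  have ha := fA_rec (μ := μ) a 1
  have hb := fA_rec (μ := μ) b 1
  have hab := fA_rec (μ := μ) (b + a) 1
  rw [sum_range_add] at hab
  have e1 : ∀ j ∈ range b, (sigmaA μ (j + 1) : ℝ) * fA μ (b + a - 1 - j) 1 =
      sigmaA μ (j + 1) * fA μ (a + (b - 1 - j)) 1 := fun j hj => by
    rw [show b + a - 1 - j = a + (b - 1 - j) by simp at hj; omega]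
  have e2 : ∀ k ∈ range a, (sigmaA μ (b + k + 1) : ℝ) * fA μ (b + a - 1 - (b + k)) 1 =
      sigmaA μ (b + k + 1) * fA μ (a - 1 - k) 1 := fun k hk => by
    rw [show b + a - 1 - (b + k) = a - 1 - k by omega]
  rw [sum_congr rfl e1, sum_congr rfl e2] at hab
  simp only [one_mul, mul_sub, sub_mul, sum_sub_distrib] at *
  simp only [mul_left_comm _ (fA μ a 1), mul_right_comm _ (fA μ b 1), ← mul_sum, ← sum_mul]
  push_cast at *
  linear_combination fA μ a 1 * hb + fA μ b 1 * ha - hab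

theorem fA_add_le_fA_mul_of_sigmaA_add_le
    (hσ : ∀ k b, 0 < k → k ≤ b → (sigmaA μ (b + k) : ℝ) ≤ sigmaA μ k * fA μ b 1)
    (a b : ℕ) : fA μ (a + b) 1 ≤ fA μ a 1 * fA μ b 1 := by
  induction hn : a + b using Nat.strong_induction_on generalizing a b with
  | _ n ih =>
    subst hn
    wlog hab : a ≤ b generalizing a b
    · rw [add_comm, mul_comm]
      exact this b a (fun m hm c d hcd => ih m (by omega) c d hcd) (by omega)
    rcases b.eq_zero_or_pos with rfl | hb
    · simp [Nat.le_zero.mp hab, fA_zero]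
    have hsum : 0 ≤ ((b + a : ℕ) : ℝ) * (fA μ a 1 * fA μ b 1 - fA μ (b + a) 1) := by
      rw [mul_fA_mul_sub_fA_add]
      refine add_nonneg (sum_nonneg fun j hj => ?_) (sum_nonneg fun k hk => ?_)
      · simp only [mem_range] at hj
        exact mul_nonneg (Nat.cast_nonneg _) (sub_nonneg.mpr (ih _ (by omega) _ _ rfl))
      · simp only [mem_range] at hk
        exact mul_nonneg (sub_nonneg.mpr (hσ (k + 1) b (by omega) (by omega)))
          (fA_nonneg zero_le_one _)
    rw [add_comm a b]
    exact sub_nonneg.mp (nonneg_of_mul_nonneg_right hsum (by positivity))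

theorem fA_add_lt_fA_mul_of_sigmaA_add_lt
    (hσ : ∀ k b, 0 < k → k ≤ b → (sigmaA μ (b + k) : ℝ) ≤ sigmaA μ k * fA μ b 1)
    {a b : ℕ} (ha : 0 < a) (hab : a ≤ b)
    (hstrict : (sigmaA μ (b + a) : ℝ) < sigmaA μ a * fA μ b 1) :
    fA μ (a + b) 1 < fA μ a 1 * fA μ b 1 := by
  have hsum : 0 < ((b + a : ℕ) : ℝ) * (fA μ a 1 * fA μ b 1 - fA μ (b + a) 1) := by
    rw [mul_fA_mul_sub_fA_add]
    refine add_pos_of_nonneg_of_pos (sum_nonneg fun j hj => ?_)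
      (sum_pos' (fun k hk => ?_) ⟨a - 1, by simp; omega, ?_⟩)
    · exact mul_nonneg (Nat.cast_nonneg _)
        (sub_nonneg.mpr (fA_add_le_fA_mul_of_sigmaA_add_le hσ _ _))
    · simp only [mem_range] at hk
      exact mul_nonneg (sub_nonneg.mpr (hσ (k + 1) b (by omega) (by omega)))
        (fA_nonneg zero_le_one _)
    · rw [show a - 1 - (a - 1) = 0 by omega, fA_zero, mul_one, Nat.sub_add_cancel ha,
        show b + (a - 1) + 1 = b + a by omega]
      exact sub_pos.mpr hstrict
  rw [add_comm a b]
  exact sub_pos.mp (pos_of_mul_pos_right hsum (by positivity))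

theorem sigmaA_zero : sigmaA μ 0 = 0 := by
  simp [sigmaA]

theorem sigmaA_one : sigmaA μ 1 = μ 1 := by
  simp [sigmaA]

theorem apply_one_le_sigmaA {n : ℕ} (hn : n ≠ 0) : μ 1 ≤ sigmaA μ n := by
  unfold sigmaA
  simpa using single_le_sum (f := fun d => d * μ d) (fun _ _ => Nat.zero_le _)
    (Nat.one_mem_divisors.mpr hn)

theorem apply_one_add_mul_le_sigmaA {n : ℕ} (hn : 2 ≤ n) : μ 1 + n * μ n ≤ sigmaA μ n := by
  have hsub : ({1, n} : Finset ℕ) ⊆ n.divisors := by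
    intro d hd
    simp only [mem_insert, mem_singleton] at hd
    rcases hd with rfl | rfl <;> simp <;> omega
  unfold sigmaA
  simpa [sum_pair (show 1 ≠ n by omega)] using
    sum_le_sum_of_subset (f := fun d => d * μ d) hsub

theorem PowerSeries.coeff_X_mul_derivative {R : Type*} [CommSemiring R] (f : R⟦X⟧) (n : ℕ) :
    coeff n (X * d⁄dX R f) = n * coeff n f := by
  cases n with
  | zero => simp
  | succ n => rw [coeff_succ_X_mul, coeff_derivative, mul_comm]; push_cast; rfl

theorem PowerSeries.derivative_mk_one {R : Type*} [CommSemiring R] :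
    d⁄dX R (PowerSeries.mk 1) = PowerSeries.mk 1 ^ 2 := by
  ext n
  simp [coeff_derivative, pow_two, coeff_mul]

theorem PowerSeries.coeff_mk_one_pow_three (n : ℕ) :
    coeff n (PowerSeries.mk 1 ^ 3 : ℕ⟦X⟧) = (n + 2).choose 2 := by
  have h := congrArg (coeff n) (mk_one_pow_eq_mk_choose_add ℤ 2)
  have hmap : (PowerSeries.mk 1 : ℤ⟦X⟧) = map (Nat.castRingHom ℤ) (PowerSeries.mk 1) := by
    ext; simp
  rw [hmap, ← map_pow, coeff_map, coeff_mk] at h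
  rw [add_comm n]
  exact Nat.cast_injective h

noncomputable def bigPartSeries (μ : ℕ → ℕ) : ℕ⟦X⟧ :=
  PowerSeries.mk fun d => if 2 ≤ d then μ d else 0

/-- Generating function of the `B`-partitions with at most one part other than `1`, the part `1`
having multiplicity `3`. -/
noncomputable def lowerSeries (μ : ℕ → ℕ) : ℕ⟦X⟧ :=
  (1 + bigPartSeries μ) * PowerSeries.mk 1 ^ 3

def lowerBound (μ : ℕ → ℕ) (n : ℕ) : ℕ :=
  (n + 2).choose 2 + ∑ d ∈ Icc 2 n, μ d * (n - d + 2).choose 2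

theorem coeff_lowerSeries (n : ℕ) : coeff n (lowerSeries μ) = lowerBound μ n := by
  rw [lowerSeries, add_mul, one_mul, map_add, coeff_mul, lowerBound, coeff_mk_one_pow_three,
    Nat.sum_antidiagonal_eq_sum_range_succ_mk]
  congr 1
  simp only [bigPartSeries, coeff_mk, coeff_mk_one_pow_three, ite_mul, zero_mul]
  rw [← sum_filter]
  exact sum_congr (by ext; simp; omega) fun _ _ => rfl

/-- The factor `3 X (mk 1) + X (d⁄dX bigPartSeries)` has coefficients at most `σ_A` when
`μ 1 = 3`, and the second term on the left has nonnegative coefficients; so the coefficients of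
`lowerSeries` are a subsolution of `n p(n) = ∑ σ_A(j) p(n - j)`. -/
theorem X_mul_derivative_lowerSeries :
    X * d⁄dX ℕ (lowerSeries μ) +
        X * d⁄dX ℕ (bigPartSeries μ) * bigPartSeries μ * PowerSeries.mk 1 ^ 3 =
      (3 * X * PowerSeries.mk 1 + X * d⁄dX ℕ (bigPartSeries μ)) * lowerSeries μ := by
  rw [lowerSeries, Derivation.leibniz, Derivation.leibniz_pow, map_add, derivative_one,
    derivative_mk_one]
  simp only [smul_eq_mul, nsmul_eq_mul]
  push_cast
  ring

theorem coeff_three_X_mul_mk_one_add_le_sigmaA (hμ1 : μ 1 = 3) (n : ℕ) :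
    coeff n (3 * X * PowerSeries.mk 1 + X * d⁄dX ℕ (bigPartSeries μ)) ≤ sigmaA μ n := by
  rw [map_add, coeff_X_mul_derivative, mul_assoc, ← map_ofNat C 3, coeff_C_mul]
  rcases n with _ | _ | n
  · simp [sigmaA_zero]
  · simp [bigPartSeries, sigmaA_one, hμ1]
  · have h := apply_one_add_mul_le_sigmaA (μ := μ) (n := n + 2) (by omega)
    simp [bigPartSeries, coeff_succ_X_mul, hμ1] at h ⊢
    exact h

theorem mul_lowerBound_le (hμ1 : μ 1 = 3) (n : ℕ) :
    n * lowerBound μ n ≤ ∑ p ∈ antidiagonal n, sigmaA μ p.1 * lowerBound μ p.2 := by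
  have h := congrArg (coeff n) (X_mul_derivative_lowerSeries (μ := μ))
  rw [map_add, coeff_X_mul_derivative, coeff_lowerSeries,
    coeff_mul n (3 * X * PowerSeries.mk 1 + _)] at h
  calc n * lowerBound μ n ≤ _ := le_self_add
    _ = _ := h
    _ ≤ _ := sum_le_sum fun p _ => by
      rw [coeff_lowerSeries]
      exact Nat.mul_le_mul_right _ (coeff_three_X_mul_mk_one_add_le_sigmaA hμ1 _)

theorem sum_antidiagonal_sigmaA_mul (g : ℕ → ℕ) (n : ℕ) :
    ∑ p ∈ antidiagonal n, sigmaA μ p.1 * g p.2 =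
      ∑ j ∈ range n, sigmaA μ (j + 1) * g (n - 1 - j) := by
  rw [Nat.sum_antidiagonal_eq_sum_range_succ_mk, sum_range_succ', sigmaA_zero, zero_mul, add_zero]
  exact sum_congr rfl fun j _ => by rw [Nat.sub_sub, add_comm 1]

theorem lowerBound_le_fA (hμ1 : μ 1 = 3) (n : ℕ) : (lowerBound μ n : ℝ) ≤ fA μ n 1 := by
  refine le_fA_of_subsolution (q := fun n => (lowerBound μ n : ℝ)) (by simp [lowerBound])
    (fun n => ?_) n
  have h := mul_lowerBound_le hμ1 n
  rw [sum_antidiagonal_sigmaA_mul] at h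
  exact_mod_cast h

theorem Nat.add_two_choose_two_mul_two (n : ℕ) : (n + 2).choose 2 * 2 = (n + 2) * (n + 1) := by
  simpa using (Nat.add_one_mul_choose_eq (n + 1) 1).symm

theorem Nat.succ_le_add_two_choose_two (n : ℕ) : n + 1 ≤ (n + 2).choose 2 := by
  have := Nat.add_two_choose_two_mul_two n
  nlinarith

theorem sigmaA_lt_three_mul_lowerBound (hμ3 : ∀ d, μ d ≤ 3) {m y : ℕ} (hy : 4 ≤ y)
    (hym : y < m) (hm : m ≤ 2 * y) : sigmaA μ m < 3 * lowerBound μ y := by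
  let small : ℕ → Prop := fun d => 2 ≤ d ∧ 3 * d ≤ m
  have hlarge : (m.divisors.filter fun d => ¬small d) ⊆ {1, m / 2, m} := by
    intro d hd
    simp only [mem_filter, Nat.mem_divisors, small] at hd
    obtain ⟨⟨⟨k, rfl⟩, -⟩, hd⟩ := hd
    have : k ≠ 0 := by rintro rfl; omega
    have : d ≠ 0 := by rintro rfl; omega
    simp only [mem_insert, mem_singleton]
    rcases Nat.lt_or_ge k 3 with hk | hk
    · interval_cases k <;> omega
    · have := Nat.mul_le_mul_left d hk
      omega
  have hsmall : ∀ d ∈ m.divisors.filter small,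
      d * μ d ≤ 3 * (μ d * (y - d + 2).choose 2) := by
    intro d hd
    simp only [mem_filter, small] at hd
    have := Nat.succ_le_add_two_choose_two (y - d)
    have : d ≤ 3 * (y - d + 2).choose 2 := by omega
    nlinarith [Nat.mul_le_mul_left (μ d) this]
  have hlarge_sum : ∑ d ∈ m.divisors.filter (fun d => ¬small d), d * μ d ≤ 3 + 3 * y + 3 * m := by
    refine (sum_le_sum_of_subset hlarge).trans ?_
    rw [sum_insert (by simp; omega), sum_pair (by omega)]
    have := Nat.mul_le_mul_left (m / 2) (hμ3 (m / 2))
    have := Nat.mul_le_mul_left m (hμ3 m)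
    have := hμ3 1
    omega
  have hsmall_sum : ∑ d ∈ m.divisors.filter small, d * μ d ≤
      3 * ∑ d ∈ Icc 2 y, μ d * (y - d + 2).choose 2 := by
    rw [mul_sum]
    refine (sum_le_sum hsmall).trans (sum_le_sum_of_subset fun d hd => ?_)
    simp only [mem_filter, small] at hd
    simp only [mem_Icc]
    omega
  have hc : 1 + y + m < (y + 2).choose 2 := by nlinarith [Nat.add_two_choose_two_mul_two y]
  unfold sigmaA lowerBound
  rw [← sum_filter_add_sum_filter_not _ small]
  linarith

theorem sigmaA_add_lt_three_mul_lowerBound (hμ3 : ∀ d, μ d ≤ 3) {x y : ℕ} (hx : 0 < x)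
    (hxy : x ≤ y) (h : ¬(x = 1 ∧ y = 1 ∧ μ 2 = 3)) : sigmaA μ (x + y) < 3 * lowerBound μ y := by
  rcases le_or_gt 4 y with hy | hy
  · exact sigmaA_lt_three_mul_lowerBound hμ3 hy (by omega) (by omega)
  have := hμ3 1; have := hμ3 2; have := hμ3 3; have := hμ3 4; have := hμ3 5; have := hμ3 6
  interval_cases y <;> interval_cases x <;>
    simp [sigmaA, lowerBound, sum_Icc_succ_top, Nat.choose,
      show Nat.divisors 2 = {1, 2} by decide, show Nat.divisors 3 = {1, 3} by decide,
      show Nat.divisors 4 = {1, 2, 4} by decide, show Nat.divisors 5 = {1, 5} by decide,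
      show Nat.divisors 6 = {1, 2, 3, 6} by decide] at h ⊢ <;> omega

theorem sigmaA_add_le_three_mul_lowerBound (hμ3 : ∀ d, μ d ≤ 3) {x y : ℕ} (hx : 0 < x)
    (hxy : x ≤ y) : sigmaA μ (x + y) ≤ 3 * lowerBound μ y := by
  by_cases h : x = 1 ∧ y = 1 ∧ μ 2 = 3
  · obtain ⟨rfl, rfl, h2⟩ := h
    have := hμ3 1
    simp [sigmaA, lowerBound, Nat.choose, h2, show Nat.divisors 2 = {1, 2} by decide]
    omega
  · exact (sigmaA_add_lt_three_mul_lowerBound hμ3 hx hxy h).le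

theorem three_mul_le_sigmaA_mul_fA (hμ1 : μ 1 = 3) {k : ℕ} (hk : 0 < k) (b : ℕ) :
    3 * fA μ b 1 ≤ sigmaA μ k * fA μ b 1 := by
  have h := apply_one_le_sigmaA (μ := μ) hk.ne'
  rw [hμ1] at h
  exact mul_le_mul_of_nonneg_right (by exact_mod_cast h) (fA_nonneg zero_le_one b)

theorem sigmaA_add_le_mul_fA (hμ3 : ∀ d, μ d ≤ 3) (hμ1 : μ 1 = 3) {k b : ℕ} (hk : 0 < k)
    (hkb : k ≤ b) : (sigmaA μ (b + k) : ℝ) ≤ sigmaA μ k * fA μ b 1 :=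
  calc (sigmaA μ (b + k) : ℝ) ≤ 3 * lowerBound μ b := by
        rw [add_comm]; exact_mod_cast sigmaA_add_le_three_mul_lowerBound hμ3 hk hkb
    _ ≤ 3 * fA μ b 1 := by gcongr; exact lowerBound_le_fA hμ1 b
    _ ≤ _ := three_mul_le_sigmaA_mul_fA hμ1 hk b

theorem sigmaA_add_lt_mul_fA (hμ3 : ∀ d, μ d ≤ 3) (hμ1 : μ 1 = 3) {k b : ℕ} (hk : 0 < k)
    (hkb : k ≤ b) (h : ¬(k = 1 ∧ b = 1 ∧ μ 2 = 3)) :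
    (sigmaA μ (b + k) : ℝ) < sigmaA μ k * fA μ b 1 :=
  calc (sigmaA μ (b + k) : ℝ) < 3 * lowerBound μ b := by
        rw [add_comm]; exact_mod_cast sigmaA_add_lt_three_mul_lowerBound hμ3 hk hkb h
    _ ≤ 3 * fA μ b 1 := by gcongr; exact lowerBound_le_fA hμ1 b
    _ ≤ _ := three_mul_le_sigmaA_mul_fA hμ1 hk b

theorem stmt_13_general (μ : ℕ → ℕ) (hμ : ∀ j, μ j = 0 ∨ μ j = 3) (hμ1 : μ 1 = 3)
    (a b : ℕ) (ha : 1 ≤ a) (hb : 1 ≤ b) (h : ¬(a = 1 ∧ b = 1 ∧ μ 2 = 3)) :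
    fA μ a 1 * fA μ b 1 > fA μ (a + b) 1 := by
  have hμ3 : ∀ d, μ d ≤ 3 := fun d => by rcases hμ d with h | h <;> omega
  have hσ := fun k b (hk : 0 < k) hkb => sigmaA_add_le_mul_fA hμ3 hμ1 (b := b) hk hkb
  rcases le_total a b with hab | hba
  · exact fA_add_lt_fA_mul_of_sigmaA_add_lt hσ ha hab (sigmaA_add_lt_mul_fA hμ3 hμ1 ha hab h)
  · rw [add_comm, mul_comm]
    exact fA_add_lt_fA_mul_of_sigmaA_add_lt hσ hb hba
      (sigmaA_add_lt_mul_fA hμ3 hμ1 hb hba fun ⟨h₁, h₂, h₃⟩ => h ⟨h₂, h₁, h₃⟩)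

/-- For a multiset B of positive integers with 1 in B in which every element occurs with multiplicity exactly 3, the B-partition function p_B(n) = f_{B,n}(1) satisfies p_B(a) p_B(b) > p_B(a+b) for all a, b >= 1, except possibly a = b = 1 when 2 in B. -/
theorem stmt_13 (μ : ℕ → ℕ) (hμ0 : μ 0 = 0) (hμ : ∀ j, μ j = 0 ∨ μ j = 3) (hμ1 : μ 1 = 3)
    (a b : ℕ) (ha : 1 ≤ a) (hb : 1 ≤ b) (h : ¬(a = 1 ∧ b = 1 ∧ μ 2 = 3)) :
    fA μ a 1 * fA μ b 1 > fA μ (a + b) 1 :=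
  stmt_13_general μ hμ hμ1 a b ha hb h
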